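/- arXiv:2103.00591 — 3 statements merged into one kernel-verified Lean document; each statement's English description precedes it below -/
import Mathlib

section
/- Let η < 0, c > 0, γ > 0, and I₀ ∈ (0,1) with S₀ = 1 - I₀. If I₀ ≥ 1/(1 - 4ηγ/c), then for every β > 0 one has β(1 + (ηβ/c)I₀)(1 - I₀) - γ ≤ 0; that is, the epidemic never takes off at time 0 for any transmission rate. -/
/-- If I₀ ≥ 1/(1 - 4ηγ/c), then for every β > 0 the epidemic does not take off:
β(1 + (ηβ/c)I₀)(1 - I₀) - γ ≤ 0. -/
theorem stmt2 (η c γ I₀ : ℝ) (hη : η < 0) (hc : 0 < c) (hγ : 0 < γ)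
    (hI₀ : 0 < I₀) (hI₁ : I₀ < 1) (h : 1 / (1 - 4 * η * γ / c) ≤ I₀) :
    ∀ β : ℝ, 0 < β → β * (1 + (η * β / c) * I₀) * (1 - I₀) - γ ≤ 0 := by
  intro β hβ
  have hden : 0 < 1 - 4 * η * γ / c := by
    have : 4 * η * γ / c < 0 := div_neg_of_neg_of_pos (by nlinarith) hc
    linarith
  have h1 : 1 ≤ I₀ * (1 - 4 * η * γ / c) := by
    rw [div_le_iff₀ hden] at h; linarith
  have h2 : c ≤ I₀ * c - 4 * η * γ * I₀ := by
    have := mul_le_mul_of_nonneg_right h1 hc.le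
    field_simp at this
    nlinarith
  have h3 : 0 ≤ (1 - I₀) * (c + 2 * η * β * I₀) ^ 2 :=
    mul_nonneg (by linarith) (sq_nonneg _)
  have h4 : (1 - I₀) * c ^ 2 ≤ -4 * η * γ * I₀ * c := by nlinarith
  have h5 : 0 < -4 * η * I₀ := by nlinarith
  have h6 : 0 ≤ (-4 * η * I₀) * (γ * c - β * (c + η * β * I₀) * (1 - I₀)) := by nlinarith
  have key : β * (c + η * β * I₀) * (1 - I₀) ≤ γ * c := by
    by_contra hX
    push_neg at hX
    nlinarith [mul_pos h5 (by linarith : (0:ℝ) < β * (c + η * β * I₀) * (1 - I₀) - γ * c)]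
  have heq : β * (1 + η * β / c * I₀) * (1 - I₀) = β * (c + η * β * I₀) * (1 - I₀) / c := by
    field_simp
  rw [heq, sub_nonpos, div_le_iff₀ hc]
  linarith [key]
end

section
/- Let S, I be positive C¹ functions on [0,∞) with Ṡ = -βεSI, İ = βεSI - γI, where ε(t) = max(1 + (ηβ/c)I(t), 0), β, γ, c > 0, η < 0. If S is weakly decreasing, lim_{t→∞} I(t) = 0, and lim_{t→∞} ε(t) = 1, then S∞ := lim_{t→∞} S(t) satisfies S∞ ≤ γ/β; i.e., if there existed δ > 0 with S(t) ≥ γ/β + δ for all t, then I(t) would grow exponentially beyond some time, contradicting I(t) → 0. -/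
/-! If `S∞ > γ/β`, then `β ε S → β S∞ > γ`, so eventually `İ = (β ε S - γ) I > 0`: the positive
function `I` is eventually strictly increasing and cannot tend to `0`. -/

open Filter Topology

theorem not_tendsto_zero_of_eventually_pos_of_deriv_pos {f : ℝ → ℝ} (hf : Continuous f)
    (hpos : ∀ᶠ t in atTop, 0 < f t) (hderiv : ∀ᶠ t in atTop, 0 < deriv f t) :
    ¬ Tendsto f atTop (𝓝 0) := by
  obtain ⟨T, hT⟩ := eventually_atTop.mp (hpos.and hderiv)
  have hmono : StrictMonoOn f (Set.Ici T) :=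
    strictMonoOn_of_deriv_pos (convex_Ici T) hf.continuousOn fun t ht => by
      rw [interior_Ici] at ht
      exact (hT t ht.le).2
  intro hlim
  have hle : f T ≤ 0 := ge_of_tendsto hlim <| by
    filter_upwards [eventually_ge_atTop T] with t ht
    exact hmono.monotoneOn Set.self_mem_Ici ht ht
  linarith [(hT T le_rfl).1]

theorem stmt9_general (β γ c η : ℝ) (hβ : 0 < β)
    (S I : ℝ → ℝ) (hI : ContDiff ℝ 1 I)
    (hIpos : ∀ t, 0 ≤ t → 0 < I t)
    (hI' : ∀ t, 0 ≤ t →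
      deriv I t = β * max (1 + (η * β / c) * I t) 0 * S t * I t - γ * I t)
    (hIlim : Filter.Tendsto I Filter.atTop (nhds 0))
    (hεlim : Filter.Tendsto (fun t => max (1 + (η * β / c) * I t) 0)
      Filter.atTop (nhds 1))
    (Sinf : ℝ) (hlim : Filter.Tendsto S Filter.atTop (nhds Sinf)) :
    Sinf ≤ γ / β := by
  by_contra! hSinf
  have hγ : γ < β * 1 * Sinf := by rw [mul_one]; exact (div_lt_iff₀' hβ).mp hSinf
  have hgrowth : ∀ᶠ t in atTop, γ < β * max (1 + (η * β / c) * I t) 0 * S t :=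
    ((hεlim.const_mul β).mul hlim).eventually (lt_mem_nhds hγ)
  refine not_tendsto_zero_of_eventually_pos_of_deriv_pos hI.continuous ?_ ?_ hIlim
  · filter_upwards [eventually_ge_atTop 0] with t ht using hIpos t ht
  · filter_upwards [eventually_ge_atTop 0, hgrowth] with t ht hgrowth_t
    rw [hI' t ht, ← sub_mul]
    exact mul_pos (sub_pos.mpr hgrowth_t) (hIpos t ht)

/-- In the SIR model with equilibrium distancing, if S is weakly decreasing,
I(t) → 0 and ε(t) → 1, then Sinf = lim S(t) satisfies Sinf ≤ γ/β. -/
theorem stmt9 (β γ c η : ℝ) (hβ : 0 < β) (hγ : 0 < γ) (hc : 0 < c) (hη : η < 0)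
    (S I : ℝ → ℝ) (hS : ContDiff ℝ 1 S) (hI : ContDiff ℝ 1 I)
    (hSpos : ∀ t, 0 ≤ t → 0 < S t) (hIpos : ∀ t, 0 ≤ t → 0 < I t)
    (hS' : ∀ t, 0 ≤ t →
      deriv S t = -(β * max (1 + (η * β / c) * I t) 0 * S t * I t))
    (hI' : ∀ t, 0 ≤ t →
      deriv I t = β * max (1 + (η * β / c) * I t) 0 * S t * I t - γ * I t)
    (hSmono : AntitoneOn S (Set.Ici (0 : ℝ)))
    (hIlim : Filter.Tendsto I Filter.atTop (nhds 0))
    (hεlim : Filter.Tendsto (fun t => max (1 + (η * β / c) * I t) 0)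
      Filter.atTop (nhds 1))
    (Sinf : ℝ) (hlim : Filter.Tendsto S Filter.atTop (nhds Sinf)) :
    Sinf ≤ γ / β :=
  stmt9_general β γ c η hβ S I hI hIpos hI' hIlim hεlim Sinf hlim
end

section
/- Under the adjoint dynamics η̇(t) = η(t)(ρ + ε(t)βI(t)) + (π_S - (c/2)(1-ε(t))² - ρV_I) with ε(t) ∈ [0,1], I(t) ∈ [0,1], π_S - c/2 > ρV_I, and η(t) < 0 converging to -(π_S - ρV_I)/ρ as t → ∞: if η(t₀) > -(π_S - ρV_I - c/2)/(ρ+β) at some t₀, then η̇(t₀) > 0. Consequently every solution satisfying the limit condition obeys η(t) ≤ -(π_S - ρV_I - c/2)/(ρ+β) for all t. -/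
/-- Upper bound for the co-state: under the adjoint dynamics, if η exceeds
-(π_S - ρV_I - c/2)/(ρ+β) at some time then η̇ > 0 there; consequently any solution
converging to -(π_S - ρV_I)/ρ satisfies η(t) ≤ -(π_S - ρV_I - c/2)/(ρ+β) for all t. -/
theorem stmt15 (ρ β c πS VI : ℝ) (hρ : 0 < ρ) (hβ : 0 < β) (hc : 0 < c)
    (hprem : ρ * VI < πS - c / 2)
    (η ε I : ℝ → ℝ) (hηdiff : Differentiable ℝ η)
    (hε : ∀ t, ε t ∈ Set.Icc (0 : ℝ) 1) (hI : ∀ t, I t ∈ Set.Icc (0 : ℝ) 1)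
    (hηneg : ∀ t, η t < 0)
    (hode : ∀ t, deriv η t
      = η t * (ρ + ε t * β * I t) + (πS - c / 2 * (1 - ε t) ^ 2 - ρ * VI))
    (hlim : Filter.Tendsto η Filter.atTop (nhds (-((πS - ρ * VI) / ρ)))) :
    (∀ t₀, -((πS - ρ * VI - c / 2) / (ρ + β)) < η t₀ → 0 < deriv η t₀) ∧
    (∀ t, η t ≤ -((πS - ρ * VI - c / 2) / (ρ + β))) := by
  have hρβ : 0 < ρ + β := by linarith
  set L : ℝ := -((πS - ρ * VI - c / 2) / (ρ + β)) with hL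
  -- Part 1
  have part1 : ∀ t₀, L < η t₀ → 0 < deriv η t₀ := by
    intro t₀ h
    have hε0 := (hε t₀).1; have hε1 := (hε t₀).2
    have hI0 := (hI t₀).1; have hI1 := (hI t₀).2
    have hηt := hηneg t₀
    -- from h : -(A/(ρ+β)) < η t₀ get -(πS - ρ*VI - c/2) < η t₀ * (ρ+β)
    have h' : -(πS - ρ * VI - c / 2) < η t₀ * (ρ + β) := by
      have : -η t₀ < (πS - ρ * VI - c / 2) / (ρ + β) := by
        rw [hL] at h; linarith
      have := (lt_div_iff₀ hρβ).mp this
      linarith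
    have hεI : ε t₀ * I t₀ ≤ 1 := mul_le_one₀ hε1 hI0 hI1
    have hεI0 : 0 ≤ ε t₀ * I t₀ := mul_nonneg hε0 hI0
    have hβεI : (0:ℝ) ≤ β - ε t₀ * β * I t₀ := by nlinarith
    have hmono : η t₀ * (ρ + β) ≤ η t₀ * (ρ + ε t₀ * β * I t₀) := by
      nlinarith [mul_nonneg (le_of_lt (neg_pos.mpr hηt)) hβεI]
    have hsq : c / 2 * (1 - ε t₀) ^ 2 ≤ c / 2 := by
      have h1 : (1 - ε t₀) ^ 2 ≤ 1 := by nlinarith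
      nlinarith
    rw [hode t₀]
    nlinarith
  refine ⟨part1, ?_⟩
  -- limit value is strictly below L
  have hLimL : -((πS - ρ * VI) / ρ) < L := by
    rw [hL, neg_lt_neg_iff, div_lt_div_iff₀ hρβ hρ]
    nlinarith
  -- Part 2
  intro t
  by_contra hcon
  push_neg at hcon
  -- claim: η stays ≥ η t on [t, ∞)
  have hcont : Continuous η := hηdiff.continuous
  have key : ∀ t₂, t ≤ t₂ → η t ≤ η t₂ := by
    intro t₂ ht₂
    by_contra hlt
    push_neg at hlt
    -- choose v with max L (η t₂) < v < η t
    obtain ⟨v, hv1, hv2⟩ := exists_between (max_lt hcon hlt)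
    have hvL : L < v := lt_of_le_of_lt (le_max_left _ _) hv1
    have hvt₂ : η t₂ < v := lt_of_le_of_lt (le_max_right _ _) hv1
    set E : Set ℝ := Set.Icc t t₂ ∩ η ⁻¹' {v} with hE
    have hEne : E.Nonempty := by
      have : v ∈ Set.Icc (η t₂) (η t) := ⟨le_of_lt hvt₂, le_of_lt hv2⟩
      obtain ⟨s, hs, hsv⟩ := intermediate_value_Icc' ht₂ hcont.continuousOn this
      exact ⟨s, hs, hsv⟩
    have hEclosed : IsClosed E := isClosed_Icc.inter (isClosed_singleton.preimage hcont)
    have hEbdd : BddAbove E := ⟨t₂, fun x hx => hx.1.2⟩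
    set s₀ : ℝ := sSup E with hs₀
    have hs₀E : s₀ ∈ E := hEclosed.csSup_mem hEne hEbdd
    have hs₀v : η s₀ = v := hs₀E.2
    have hs₀lt : s₀ < t₂ := by
      rcases lt_or_eq_of_le hs₀E.1.2 with h | h
      · exact h
      · exfalso; rw [h] at hs₀v; linarith
    -- for s ∈ Ioc s₀ t₂, η s < v
    have hafter : ∀ s, s ∈ Set.Ioc s₀ t₂ → η s < v := by
      intro s hs
      by_contra hge
      push_neg at hge
      have : v ∈ Set.Icc (η t₂) (η s) := ⟨le_of_lt hvt₂, hge⟩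
      obtain ⟨s', hs', hs'v⟩ := intermediate_value_Icc' hs.2 hcont.continuousOn this
      have hs'E : s' ∈ E :=
        ⟨⟨le_trans (le_trans hs₀E.1.1 (le_of_lt hs.1)) hs'.1, hs'.2⟩, hs'v⟩
      have : s' ≤ s₀ := le_csSup hEbdd hs'E
      have : s₀ < s' := lt_of_lt_of_le hs.1 hs'.1
      linarith
    -- deriv at s₀ is positive
    have hderiv : 0 < deriv η s₀ := part1 s₀ (by rw [hs₀v]; exact hvL)
    have hHD : HasDerivAt η (deriv η s₀) s₀ := (hηdiff s₀).hasDerivAt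
    have hslope := hasDerivAt_iff_tendsto_slope.mp hHD
    have hslope' : Filter.Tendsto (slope η s₀) (nhdsWithin s₀ (Set.Ioi s₀))
        (nhds (deriv η s₀)) :=
      hslope.mono_left (nhdsWithin_mono _ (fun x hx => ne_of_gt hx))
    have hev : ∀ᶠ s in nhdsWithin s₀ (Set.Ioi s₀), 0 < slope η s₀ s :=
      hslope'.eventually (eventually_gt_nhds hderiv)
    have hmem : Set.Ioo s₀ t₂ ∈ nhdsWithin s₀ (Set.Ioi s₀) :=
      Ioo_mem_nhdsGT_of_mem ⟨le_refl _, hs₀lt⟩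
    obtain ⟨s, hspos, hsIoo⟩ := (hev.and (Filter.eventually_of_mem hmem (fun x hx => hx))).exists
    have hslt : η s < v := hafter s ⟨hsIoo.1, le_of_lt hsIoo.2⟩
    rw [slope_def_field] at hspos
    have hdpos : 0 < s - s₀ := sub_pos.mpr hsIoo.1
    have hgt : 0 < η s - η s₀ := by
      by_contra hnp
      push_neg at hnp
      have := div_nonpos_of_nonpos_of_nonneg hnp (le_of_lt hdpos)
      linarith
    linarith [hs₀v]
  -- conclude contradiction with the limit
  have : η t ≤ -((πS - ρ * VI) / ρ) :=
    ge_of_tendsto hlim (Filter.eventually_atTop.mpr ⟨t, fun b hb => key b hb⟩)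
  exact absurd this (not_le.mpr (lt_trans hLimL hcon))
end
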